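/- arXiv:1911.09450 — 4 statements merged into one kernel-verified Lean document; each statement's English description precedes it below -/
import Mathlib

section
/- Fix L ≥ 1 and real normed spaces E_0, …, E_L with continuous linear maps A^T_l, A^S_l : E_{l−1} → E_l and activation maps σ_l : E_l → E_l that are Lipschitz with constant K_l ≥ 0, for l = 1, …, L. For an input x ∈ E_0 define hidden states recursively by h^T_0 = h^S_0 = x, h^T_l = σ_l(A^T_l h^T_{l−1}), h^S_l = σ_l(A^S_l h^S_{l−1}). Then for every μ ∈ [0,1] and every layer l ∈ {1, …, L}: ‖h^T_l − h^S_l‖ ≤ μ‖σ_l(A^T_l h^T_{l−1}) − σ_l(A^S_l h^T_{l−1})‖ + (1−μ)‖σ_l(A^T_l h^S_{l−1}) − σ_l(A^S_l h^S_{l−1})‖ + K_l(μ‖A^S_l‖ + (1−μ)‖A^T_l‖)·‖h^T_{l−1} − h^S_{l−1}‖. -/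
/-- Per-layer cross-distillation bound: the layer-l gap between teacher and
student hidden states is bounded by the convex combination of the correction
and imitation discrepancies plus a propagated previous-layer error.
(Layers are indexed from 0 here: `AT l, AS l, σ l, K l` are the data of the
(l+1)-st layer of the paper, mapping `E l` to `E (l+1)`; the claim is stated
for every layer index `l+1` with `1 ≤ l+1 ≤ L`, i.e. for all `l < L`.) -/
theorem cross_distillation_layer_bound
    {L : ℕ} (hL : 1 ≤ L)
    {E : ℕ → Type*} [∀ l, NormedAddCommGroup (E l)] [∀ l, NormedSpace ℝ (E l)]
    (AT AS : ∀ l, E l →L[ℝ] E (l + 1))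
    (K : ℕ → NNReal) (σ : ∀ l, E (l + 1) → E (l + 1))
    (hσ : ∀ l, LipschitzWith (K l) (σ l))
    (x : E 0) (hT hS : ∀ l, E l)
    (hT0 : hT 0 = x) (hS0 : hS 0 = x)
    (hTrec : ∀ l, hT (l + 1) = σ l ((AT l) (hT l)))
    (hSrec : ∀ l, hS (l + 1) = σ l ((AS l) (hS l)))
    (μ : ℝ) (hμ0 : 0 ≤ μ) (hμ1 : μ ≤ 1) :
    ∀ l < L,
      ‖hT (l + 1) - hS (l + 1)‖ ≤
        μ * ‖σ l ((AT l) (hT l)) - σ l ((AS l) (hT l))‖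
          + (1 - μ) * ‖σ l ((AT l) (hS l)) - σ l ((AS l) (hS l))‖
          + (K l : ℝ) * (μ * ‖AS l‖ + (1 - μ) * ‖AT l‖) * ‖hT l - hS l‖ := by
  intro l _
  rw [hTrec, hSrec]
  have hlip : ∀ a b : E (l + 1), ‖σ l a - σ l b‖ ≤ (K l : ℝ) * ‖a - b‖ := by
    intro a b
    simpa [dist_eq_norm] using (hσ l).dist_le_mul a b
  -- decomposition 1 (via AS at hT)
  have h1 : ‖σ l ((AT l) (hT l)) - σ l ((AS l) (hS l))‖ ≤
      ‖σ l ((AT l) (hT l)) - σ l ((AS l) (hT l))‖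
        + (K l : ℝ) * ‖AS l‖ * ‖hT l - hS l‖ := by
    calc ‖σ l ((AT l) (hT l)) - σ l ((AS l) (hS l))‖
        ≤ ‖σ l ((AT l) (hT l)) - σ l ((AS l) (hT l))‖
          + ‖σ l ((AS l) (hT l)) - σ l ((AS l) (hS l))‖ := norm_sub_le_norm_sub_add_norm_sub _ _ _
      _ ≤ ‖σ l ((AT l) (hT l)) - σ l ((AS l) (hT l))‖
          + (K l : ℝ) * ‖AS l‖ * ‖hT l - hS l‖ := by
          have := hlip ((AS l) (hT l)) ((AS l) (hS l))
          have h2 : ‖(AS l) (hT l) - (AS l) (hS l)‖ ≤ ‖AS l‖ * ‖hT l - hS l‖ := by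
            simpa [map_sub] using (AS l).le_opNorm (hT l - hS l)
          nlinarith [norm_nonneg ((AS l) (hT l) - (AS l) (hS l)), (K l).coe_nonneg]
  -- decomposition 2 (via AT at hS)
  have h2 : ‖σ l ((AT l) (hT l)) - σ l ((AS l) (hS l))‖ ≤
      ‖σ l ((AT l) (hS l)) - σ l ((AS l) (hS l))‖
        + (K l : ℝ) * ‖AT l‖ * ‖hT l - hS l‖ := by
    calc ‖σ l ((AT l) (hT l)) - σ l ((AS l) (hS l))‖
        ≤ ‖σ l ((AT l) (hT l)) - σ l ((AT l) (hS l))‖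
          + ‖σ l ((AT l) (hS l)) - σ l ((AS l) (hS l))‖ := norm_sub_le_norm_sub_add_norm_sub _ _ _
      _ ≤ ‖σ l ((AT l) (hS l)) - σ l ((AS l) (hS l))‖
          + (K l : ℝ) * ‖AT l‖ * ‖hT l - hS l‖ := by
          have := hlip ((AT l) (hT l)) ((AT l) (hS l))
          have h3 : ‖(AT l) (hT l) - (AT l) (hS l)‖ ≤ ‖AT l‖ * ‖hT l - hS l‖ := by
            simpa [map_sub] using (AT l).le_opNorm (hT l - hS l)
          nlinarith [norm_nonneg ((AT l) (hT l) - (AT l) (hS l)), (K l).coe_nonneg]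
  nlinarith [mul_le_mul_of_nonneg_left h1 hμ0,
    mul_le_mul_of_nonneg_left h2 (by linarith : (0:ℝ) ≤ 1 - μ)]
end

section
/- Fix L ≥ 1 and real normed spaces E_0, …, E_L with continuous linear maps A^T_l, A^S_l : E_{l−1} → E_l and activation maps σ_l : E_l → E_l that are Lipschitz with constant K_l ≥ 0, for l = 1, …, L. For an input x ∈ E_0 define hidden states recursively by h^T_0 = h^S_0 = x, h^T_l = σ_l(A^T_l h^T_{l−1}), h^S_l = σ_l(A^S_l h^S_{l−1}). For μ ∈ [0,1] let L̃_l = μ‖σ_l(A^T_l h^T_{l−1}) − σ_l(A^S_l h^T_{l−1})‖² + (1−μ)‖σ_l(A^T_l h^S_{l−1}) − σ_l(A^S_l h^S_{l−1})‖² and C'_l(μ) = K_l(μ‖A^S_l‖ + (1−μ)‖A^T_l‖). Then for every layer l ∈ {1, …, L}: ‖h^T_l − h^S_l‖ ≤ √(L̃_l) + C'_l(μ)·‖h^T_{l−1} − h^S_{l−1}‖. -/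
lemma sqrt_concave_combo (μ a b : ℝ) (hμ0 : 0 ≤ μ) (hμ1 : μ ≤ 1)
    (ha : 0 ≤ a) (hb : 0 ≤ b) :
    μ * Real.sqrt a + (1 - μ) * Real.sqrt b ≤ Real.sqrt (μ * a + (1 - μ) * b) := by
  have h1 : 0 ≤ 1 - μ := by linarith
  have hsa := Real.sqrt_nonneg a
  have hsb := Real.sqrt_nonneg b
  rw [show a = Real.sqrt a ^ 2 by rw [Real.sq_sqrt ha],
      show b = Real.sqrt b ^ 2 by rw [Real.sq_sqrt hb]]
  rw [Real.le_sqrt (by positivity), Real.sqrt_sq hsa, Real.sqrt_sq hsb]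
  · nlinarith [sq_nonneg (Real.sqrt a - Real.sqrt b), mul_nonneg hμ0 h1]
  · positivity

/-- Per-layer cross-distillation bound with the square-rooted combined loss:
the layer-l gap is bounded by the square root of the cross-distillation loss
`L̃_l = μ·(correction loss) + (1−μ)·(imitation loss)` plus
`C'_l(μ) = K_l (μ‖A^S_l‖ + (1−μ)‖A^T_l‖)` times the previous-layer gap.
(Layers are indexed from 0 here: `AT l, AS l, σ l, K l` are the data of the
(l+1)-st layer of the paper, mapping `E l` to `E (l+1)`; the claim is stated
for every layer index `l+1` with `1 ≤ l+1 ≤ L`, i.e. for all `l < L`.) -/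
theorem cross_distillation_layer_sqrt_bound
    {L : ℕ} (hL : 1 ≤ L)
    {E : ℕ → Type*} [∀ l, NormedAddCommGroup (E l)] [∀ l, NormedSpace ℝ (E l)]
    (AT AS : ∀ l, E l →L[ℝ] E (l + 1))
    (K : ℕ → NNReal) (σ : ∀ l, E (l + 1) → E (l + 1))
    (hσ : ∀ l, LipschitzWith (K l) (σ l))
    (x : E 0) (hT hS : ∀ l, E l)
    (hT0 : hT 0 = x) (hS0 : hS 0 = x)
    (hTrec : ∀ l, hT (l + 1) = σ l ((AT l) (hT l)))
    (hSrec : ∀ l, hS (l + 1) = σ l ((AS l) (hS l)))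
    (μ : ℝ) (hμ0 : 0 ≤ μ) (hμ1 : μ ≤ 1) :
    ∀ l < L,
      ‖hT (l + 1) - hS (l + 1)‖ ≤
        Real.sqrt (μ * ‖σ l ((AT l) (hT l)) - σ l ((AS l) (hT l))‖ ^ 2
            + (1 - μ) * ‖σ l ((AT l) (hS l)) - σ l ((AS l) (hS l))‖ ^ 2)
          + (K l : ℝ) * (μ * ‖AS l‖ + (1 - μ) * ‖AT l‖) * ‖hT l - hS l‖ := by
  intro l _
  set a := ‖σ l ((AT l) (hT l)) - σ l ((AS l) (hT l))‖ with ha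
  set b := ‖σ l ((AT l) (hS l)) - σ l ((AS l) (hS l))‖ with hb
  set g := ‖hT l - hS l‖ with hg
  set D := ‖hT (l + 1) - hS (l + 1)‖ with hD
  have h1μ : 0 ≤ 1 - μ := by linarith
  -- Lipschitz estimates
  have lipS : ‖σ l ((AS l) (hT l)) - σ l ((AS l) (hS l))‖ ≤ (K l : ℝ) * ‖AS l‖ * g := by
    calc ‖σ l ((AS l) (hT l)) - σ l ((AS l) (hS l))‖
        ≤ (K l : ℝ) * ‖(AS l) (hT l) - (AS l) (hS l)‖ := by
          simpa [dist_eq_norm] using (hσ l).dist_le_mul ((AS l) (hT l)) ((AS l) (hS l))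
      _ ≤ (K l : ℝ) * (‖AS l‖ * g) :=
          mul_le_mul_of_nonneg_left
            (by simpa [map_sub] using (AS l).le_opNorm (hT l - hS l)) (K l).2
      _ = (K l : ℝ) * ‖AS l‖ * g := by ring
  have lipT : ‖σ l ((AT l) (hT l)) - σ l ((AT l) (hS l))‖ ≤ (K l : ℝ) * ‖AT l‖ * g := by
    calc ‖σ l ((AT l) (hT l)) - σ l ((AT l) (hS l))‖
        ≤ (K l : ℝ) * ‖(AT l) (hT l) - (AT l) (hS l)‖ := by
          simpa [dist_eq_norm] using (hσ l).dist_le_mul ((AT l) (hT l)) ((AT l) (hS l))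
      _ ≤ (K l : ℝ) * (‖AT l‖ * g) :=
          mul_le_mul_of_nonneg_left
            (by simpa [map_sub] using (AT l).le_opNorm (hT l - hS l)) (K l).2
      _ = (K l : ℝ) * ‖AT l‖ * g := by ring
  -- correction-side triangle inequality
  have hcorr : D ≤ a + (K l : ℝ) * ‖AS l‖ * g := by
    have := norm_sub_le_norm_sub_add_norm_sub (σ l ((AT l) (hT l))) (σ l ((AS l) (hT l)))
      (σ l ((AS l) (hS l)))
    rw [hD, hTrec, hSrec]
    calc ‖σ l ((AT l) (hT l)) - σ l ((AS l) (hS l))‖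
        ≤ a + ‖σ l ((AS l) (hT l)) - σ l ((AS l) (hS l))‖ := this
      _ ≤ a + (K l : ℝ) * ‖AS l‖ * g := by linarith
  -- imitation-side triangle inequality
  have himit : D ≤ b + (K l : ℝ) * ‖AT l‖ * g := by
    have := norm_sub_le_norm_sub_add_norm_sub (σ l ((AT l) (hT l))) (σ l ((AT l) (hS l)))
      (σ l ((AS l) (hS l)))
    rw [hD, hTrec, hSrec]
    calc ‖σ l ((AT l) (hT l)) - σ l ((AS l) (hS l))‖
        ≤ ‖σ l ((AT l) (hT l)) - σ l ((AT l) (hS l))‖ + b := this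
      _ ≤ b + (K l : ℝ) * ‖AT l‖ * g := by linarith
  have hcomb : D ≤ (μ * a + (1 - μ) * b)
      + (K l : ℝ) * (μ * ‖AS l‖ + (1 - μ) * ‖AT l‖) * g := by
    nlinarith [mul_le_mul_of_nonneg_left hcorr hμ0, mul_le_mul_of_nonneg_left himit h1μ]
  have hsq : μ * a + (1 - μ) * b ≤ Real.sqrt (μ * a ^ 2 + (1 - μ) * b ^ 2) := by
    have := sqrt_concave_combo μ (a ^ 2) (b ^ 2) hμ0 hμ1 (sq_nonneg a) (sq_nonneg b)
    rwa [Real.sqrt_sq (norm_nonneg _), Real.sqrt_sq (norm_nonneg _)] at this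
  linarith
end

section
/- Fix L ≥ 1 and real normed spaces E_0, …, E_L with continuous linear maps A^T_l, A^S_l : E_{l−1} → E_l and activation maps σ_l : E_l → E_l that are Lipschitz with constant K_l ≥ 0, for l = 1, …, L. For an input x ∈ E_0 define hidden states recursively by h^T_0 = h^S_0 = x, h^T_l = σ_l(A^T_l h^T_{l−1}), h^S_l = σ_l(A^S_l h^S_{l−1}). For μ ∈ [0,1] let L̃_l = μ‖σ_l(A^T_l h^T_{l−1}) − σ_l(A^S_l h^T_{l−1})‖² + (1−μ)‖σ_l(A^T_l h^S_{l−1}) − σ_l(A^S_l h^S_{l−1})‖² and C'_l(μ) = K_l(μ‖A^S_l‖ + (1−μ)‖A^T_l‖). Then the final hidden-state gap satisfies ‖h^T_L − h^S_L‖ ≤ ∑_{l=1}^{L} (∏_{k=l+1}^{L} C'_k(μ)) · √(L̃_l). -/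
/-- Unrolled cross-distillation bound on the final hidden-state gap:
`‖h^T_L − h^S_L‖ ≤ ∑_{l=1}^{L} (∏_{k=l+1}^{L} C'_k(μ)) · √(L̃_l)`, where
`L̃_l` is the convex combination of the correction and imitation losses of
layer `l` and `C'_l(μ) = K_l (μ‖A^S_l‖ + (1−μ)‖A^T_l‖)`.
(Layers are indexed from 0 here: `AT l, AS l, σ l, K l` are the data of the
(l+1)-st layer of the paper; the paper's sum over layers `l = 1, …, L` with
inner product over `k = l+1, …, L` becomes a sum over `l ∈ range L` with an
inner product over `k ∈ Ico (l+1) L`.) -/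
theorem cross_distillation_unrolled_bound
    {L : ℕ} (hL : 1 ≤ L)
    {E : ℕ → Type*} [∀ l, NormedAddCommGroup (E l)] [∀ l, NormedSpace ℝ (E l)]
    (AT AS : ∀ l, E l →L[ℝ] E (l + 1))
    (K : ℕ → NNReal) (σ : ∀ l, E (l + 1) → E (l + 1))
    (hσ : ∀ l, LipschitzWith (K l) (σ l))
    (x : E 0) (hT hS : ∀ l, E l)
    (hT0 : hT 0 = x) (hS0 : hS 0 = x)
    (hTrec : ∀ l, hT (l + 1) = σ l ((AT l) (hT l)))
    (hSrec : ∀ l, hS (l + 1) = σ l ((AS l) (hS l)))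
    (μ : ℝ) (hμ0 : 0 ≤ μ) (hμ1 : μ ≤ 1) :
    ‖hT L - hS L‖ ≤
      ∑ l ∈ Finset.range L,
        (∏ k ∈ Finset.Ico (l + 1) L, (K k : ℝ) * (μ * ‖AS k‖ + (1 - μ) * ‖AT k‖))
          * Real.sqrt (μ * ‖σ l ((AT l) (hT l)) - σ l ((AS l) (hT l))‖ ^ 2
              + (1 - μ) * ‖σ l ((AT l) (hS l)) - σ l ((AS l) (hS l))‖ ^ 2) := by
  set C : ℕ → ℝ := fun k => (K k : ℝ) * (μ * ‖AS k‖ + (1 - μ) * ‖AT k‖) with hC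
  set S : ℕ → ℝ := fun l => Real.sqrt (μ * ‖σ l ((AT l) (hT l)) - σ l ((AS l) (hT l))‖ ^ 2
              + (1 - μ) * ‖σ l ((AT l) (hS l)) - σ l ((AS l) (hS l))‖ ^ 2) with hS'
  have hCnn : ∀ k, 0 ≤ C k := by
    intro k
    have : (0:ℝ) ≤ μ * ‖AS k‖ + (1 - μ) * ‖AT k‖ := by
      have := norm_nonneg (AS k)
      have := norm_nonneg (AT k)
      nlinarith
    exact mul_nonneg (K k).coe_nonneg this
  have step : ∀ n, ‖hT (n+1) - hS (n+1)‖ ≤ C n * ‖hT n - hS n‖ + S n := by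
    intro n
    set a := ‖σ n ((AT n) (hT n)) - σ n ((AS n) (hT n))‖ with ha
    set b := ‖σ n ((AT n) (hS n)) - σ n ((AS n) (hS n))‖ with hb
    set d := ‖hT n - hS n‖ with hd
    have lipS : ‖σ n ((AS n) (hT n)) - σ n ((AS n) (hS n))‖ ≤ (K n : ℝ) * ‖AS n‖ * d := by
      have h1 := (hσ n).dist_le_mul ((AS n) (hT n)) ((AS n) (hS n))
      rw [dist_eq_norm] at h1
      have h2 : ‖(AS n) (hT n) - (AS n) (hS n)‖ ≤ ‖AS n‖ * d := by
        rw [← map_sub]; exact (AS n).le_opNorm _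
      calc ‖σ n ((AS n) (hT n)) - σ n ((AS n) (hS n))‖
          ≤ (K n : ℝ) * dist ((AS n) (hT n)) ((AS n) (hS n)) := h1
        _ ≤ (K n : ℝ) * (‖AS n‖ * d) := by
            rw [dist_eq_norm]; exact mul_le_mul_of_nonneg_left h2 (K n).coe_nonneg
        _ = (K n : ℝ) * ‖AS n‖ * d := by ring
    have lipT : ‖σ n ((AT n) (hT n)) - σ n ((AT n) (hS n))‖ ≤ (K n : ℝ) * ‖AT n‖ * d := by
      have h1 := (hσ n).dist_le_mul ((AT n) (hT n)) ((AT n) (hS n))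
      rw [dist_eq_norm] at h1
      have h2 : ‖(AT n) (hT n) - (AT n) (hS n)‖ ≤ ‖AT n‖ * d := by
        rw [← map_sub]; exact (AT n).le_opNorm _
      calc ‖σ n ((AT n) (hT n)) - σ n ((AT n) (hS n))‖
          ≤ (K n : ℝ) * dist ((AT n) (hT n)) ((AT n) (hS n)) := h1
        _ ≤ (K n : ℝ) * (‖AT n‖ * d) := by
            rw [dist_eq_norm]; exact mul_le_mul_of_nonneg_left h2 (K n).coe_nonneg
        _ = (K n : ℝ) * ‖AT n‖ * d := by ring
    have e1 : ‖hT (n+1) - hS (n+1)‖ ≤ a + (K n : ℝ) * ‖AS n‖ * d := by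
      rw [hTrec, hSrec]
      calc ‖σ n ((AT n) (hT n)) - σ n ((AS n) (hS n))‖
          ≤ ‖σ n ((AT n) (hT n)) - σ n ((AS n) (hT n))‖
            + ‖σ n ((AS n) (hT n)) - σ n ((AS n) (hS n))‖ := norm_sub_le_norm_sub_add_norm_sub _ _ _
        _ ≤ a + (K n : ℝ) * ‖AS n‖ * d := by exact add_le_add le_rfl lipS
    have e2 : ‖hT (n+1) - hS (n+1)‖ ≤ (K n : ℝ) * ‖AT n‖ * d + b := by
      rw [hTrec, hSrec]
      calc ‖σ n ((AT n) (hT n)) - σ n ((AS n) (hS n))‖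
          ≤ ‖σ n ((AT n) (hT n)) - σ n ((AT n) (hS n))‖
            + ‖σ n ((AT n) (hS n)) - σ n ((AS n) (hS n))‖ := norm_sub_le_norm_sub_add_norm_sub _ _ _
        _ ≤ (K n : ℝ) * ‖AT n‖ * d + b := by exact add_le_add lipT le_rfl
    have convex : ‖hT (n+1) - hS (n+1)‖ ≤ C n * d + (μ * a + (1 - μ) * b) := by
      have h1 := mul_le_mul_of_nonneg_left e1 hμ0
      have h2 := mul_le_mul_of_nonneg_left e2 (by linarith : (0:ℝ) ≤ 1 - μ)
      have heq : C n * d + (μ * a + (1 - μ) * b)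
          = μ * (a + (K n : ℝ) * ‖AS n‖ * d) + (1 - μ) * ((K n : ℝ) * ‖AT n‖ * d + b) := by
        simp only [hC]; ring
      have hN : μ * ‖hT (n+1) - hS (n+1)‖ + (1 - μ) * ‖hT (n+1) - hS (n+1)‖
          = ‖hT (n+1) - hS (n+1)‖ := by ring
      linarith
    have sqrtle : μ * a + (1 - μ) * b ≤ S n := by
      have hanon : 0 ≤ a := norm_nonneg _
      have hbnon : 0 ≤ b := norm_nonneg _
      have hx : 0 ≤ μ * a + (1 - μ) * b := by nlinarith
      have hrfl : S n = Real.sqrt (μ * a ^ 2 + (1 - μ) * b ^ 2) := rfl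
      have hy : 0 ≤ μ * a ^ 2 + (1 - μ) * b ^ 2 := by nlinarith [sq_nonneg a, sq_nonneg b]
      rw [hrfl, Real.le_sqrt hx hy]
      nlinarith [sq_nonneg (a - b), mul_nonneg hμ0 (by linarith : (0:ℝ) ≤ 1 - μ)]
    linarith
  have main : ∀ n, ‖hT n - hS n‖ ≤ ∑ l ∈ Finset.range n, (∏ k ∈ Finset.Ico (l+1) n, C k) * S l := by
    intro n
    induction n with
    | zero => simp [hT0, hS0]
    | succ n ih =>
      have hSnn : ∀ l, 0 ≤ S l := fun l => Real.sqrt_nonneg _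
      calc ‖hT (n+1) - hS (n+1)‖ ≤ C n * ‖hT n - hS n‖ + S n := step n
        _ ≤ C n * (∑ l ∈ Finset.range n, (∏ k ∈ Finset.Ico (l+1) n, C k) * S l) + S n := by
            exact add_le_add (mul_le_mul_of_nonneg_left ih (hCnn n)) le_rfl
        _ = ∑ l ∈ Finset.range (n+1), (∏ k ∈ Finset.Ico (l+1) (n+1), C k) * S l := by
            rw [Finset.sum_range_succ, Finset.mul_sum, Finset.Ico_self, Finset.prod_empty, one_mul]
            congr 1
            refine Finset.sum_congr rfl fun l hl => ?_
            have hln : l + 1 ≤ n := Nat.succ_le_of_lt (Finset.mem_range.mp hl)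
            rw [Finset.prod_Ico_succ_top hln]
            ring
  exact main L
end

section
/- Theorem 1 (cross-distillation bound on the cross-entropy gap, explicit-constant form). Fix L ≥ 1 and let E_l = EuclideanSpace ℝ (Fin n_l) for l = 0, …, L, with continuous linear maps A^T_l, A^S_l : E_{l−1} → E_l and activation maps σ_l : E_l → E_l that are Lipschitz with constant K_l ≥ 0. For an input x ∈ E_0 define hidden states recursively by h^T_0 = h^S_0 = x, h^T_l = σ_l(A^T_l h^T_{l−1}), h^S_l = σ_l(A^S_l h^S_{l−1}). Let B : E_L → EuclideanSpace ℝ (Fin C) (with C ≥ 1) be a shared continuous linear map (the un-pruned fully-connected layer), and set logits o^T = B h^T_L and o^S = B h^S_L. For μ ∈ [0,1] let L̃_l = μ‖σ_l(A^T_l h^T_{l−1}) − σ_l(A^S_l h^T_{l−1})‖² + (1−μ)‖σ_l(A^T_l h^S_{l−1}) − σ_l(A^S_l h^S_{l−1})‖² and C'_l(μ) = K_l(μ‖A^S_l‖ + (1−μ)‖A^T_l‖). Then for every label y : Fin C, the softmax cross-entropy gap satisfies |CE(o^T; y) − CE(o^S; y)| ≤ 2‖B‖ · ∑_{l=1}^{L}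 (∏_{k=l+1}^{L} C'_k(μ)) · √(L̃_l). -/
lemma my_abs_coord_le {m : ℕ} (x : EuclideanSpace ℝ (Fin m)) (i : Fin m) : |x i| ≤ ‖x‖ := by
  have h : |x i| = Real.sqrt (‖x i‖ ^ 2) := by
    rw [Real.norm_eq_abs, Real.sqrt_sq_eq_abs, abs_abs]
  rw [h, EuclideanSpace.norm_eq]
  apply Real.sqrt_le_sqrt
  exact Finset.single_le_sum (f := fun j => ‖x j‖ ^ 2) (fun j _ => by positivity)
    (Finset.mem_univ i)

lemma my_lse_diff {m : ℕ} (hm : 0 < m) (o o' : EuclideanSpace ℝ (Fin m)) :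
    Real.log (∑ i, Real.exp (o i)) - Real.log (∑ i, Real.exp (o' i)) ≤ ‖o - o'‖ := by
  haveI : Nonempty (Fin m) := Fin.pos_iff_nonempty.mp hm
  have hpos : (0:ℝ) < ∑ i, Real.exp (o' i) :=
    Finset.sum_pos (fun i _ => Real.exp_pos _) Finset.univ_nonempty
  have hpos2 : (0:ℝ) < ∑ i, Real.exp (o i) :=
    Finset.sum_pos (fun i _ => Real.exp_pos _) Finset.univ_nonempty
  have h1 : ∑ i, Real.exp (o i) ≤ Real.exp ‖o - o'‖ * ∑ i, Real.exp (o' i) := by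
    rw [Finset.mul_sum]
    apply Finset.sum_le_sum
    intro i _
    rw [← Real.exp_add]
    apply Real.exp_le_exp.mpr
    have hco : |(o - o') i| ≤ ‖o - o'‖ := my_abs_coord_le _ i
    have hsub : (o - o') i = o i - o' i := rfl
    rw [hsub] at hco
    have := le_abs_self (o i - o' i)
    linarith
  have h2 : Real.log (∑ i, Real.exp (o i)) ≤
      Real.log (Real.exp ‖o - o'‖ * ∑ i, Real.exp (o' i)) :=
    Real.log_le_log hpos2 h1
  rw [Real.log_mul (Real.exp_ne_zero _) (ne_of_gt hpos), Real.log_exp] at h2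
  linarith

lemma my_CE_lip {m : ℕ} (hm : 0 < m) (o o' : EuclideanSpace ℝ (Fin m)) (y : Fin m) :
    |(Real.log (∑ i, Real.exp (o i)) - o y) - (Real.log (∑ i, Real.exp (o' i)) - o' y)|
      ≤ 2 * ‖o - o'‖ := by
  have h1 := my_lse_diff hm o o'
  have h2 := my_lse_diff hm o' o
  rw [← neg_sub o o', norm_neg] at h2
  have hco : |(o - o') y| ≤ ‖o - o'‖ := my_abs_coord_le _ y
  have hsub : (o - o') y = o y - o' y := rfl
  rw [hsub, abs_le] at hco
  rw [abs_le]
  constructor <;> linarith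

lemma my_jensen2 (μ a b : ℝ) (hμ0 : 0 ≤ μ) (hμ1 : μ ≤ 1) (ha : 0 ≤ a) (hb : 0 ≤ b) :
    μ * a + (1 - μ) * b ≤ Real.sqrt (μ * a ^ 2 + (1 - μ) * b ^ 2) := by
  rw [show μ * a + (1 - μ) * b = Real.sqrt ((μ * a + (1 - μ) * b) ^ 2) from
    (Real.sqrt_sq (by nlinarith)).symm]
  apply Real.sqrt_le_sqrt
  nlinarith [mul_nonneg (mul_nonneg hμ0 (by linarith : (0:ℝ) ≤ 1 - μ)) (sq_nonneg (a - b))]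

/-- Theorem 1 of the paper (explicit-constant form): the softmax cross-entropy
gap between the teacher and student logits is bounded by
`2‖B‖ · ∑_{l=1}^{L} (∏_{k=l+1}^{L} C'_k(μ)) · √(L̃_l)`, where `B` is the
shared un-pruned fully-connected layer, `L̃_l` is the cross-distillation loss
of layer `l` and `C'_l(μ) = K_l (μ‖A^S_l‖ + (1−μ)‖A^T_l‖)`.
The cross entropy is `CE(o; y) = log (∑ i, exp (o i)) − o y`.
(Layers are indexed from 0 here: `AT l, AS l, σ l, K l` are the data of the
(l+1)-st layer of the paper; the paper's sum over layers `l = 1, …, L` with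
inner product over `k = l+1, …, L` becomes a sum over `l ∈ range L` with an
inner product over `k ∈ Ico (l+1) L`.) -/
theorem cross_distillation_cross_entropy_bound
    {L : ℕ} (hL : 1 ≤ L) (n : ℕ → ℕ) {C : ℕ} (hC : 1 ≤ C)
    (AT AS : ∀ l, EuclideanSpace ℝ (Fin (n l)) →L[ℝ] EuclideanSpace ℝ (Fin (n (l + 1))))
    (K : ℕ → NNReal)
    (σ : ∀ l, EuclideanSpace ℝ (Fin (n (l + 1))) → EuclideanSpace ℝ (Fin (n (l + 1))))
    (hσ : ∀ l, LipschitzWith (K l) (σ l))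
    (B : EuclideanSpace ℝ (Fin (n L)) →L[ℝ] EuclideanSpace ℝ (Fin C))
    (x : EuclideanSpace ℝ (Fin (n 0)))
    (hT hS : ∀ l, EuclideanSpace ℝ (Fin (n l)))
    (hT0 : hT 0 = x) (hS0 : hS 0 = x)
    (hTrec : ∀ l, hT (l + 1) = σ l ((AT l) (hT l)))
    (hSrec : ∀ l, hS (l + 1) = σ l ((AS l) (hS l)))
    (μ : ℝ) (hμ0 : 0 ≤ μ) (hμ1 : μ ≤ 1)
    (CE : EuclideanSpace ℝ (Fin C) → Fin C → ℝ)
    (hCE : ∀ o y, CE o y = Real.log (∑ i, Real.exp (o i)) - o y)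
    (y : Fin C) :
    |CE (B (hT L)) y - CE (B (hS L)) y| ≤
      2 * ‖B‖ *
        ∑ l ∈ Finset.range L,
          (∏ k ∈ Finset.Ico (l + 1) L, (K k : ℝ) * (μ * ‖AS k‖ + (1 - μ) * ‖AT k‖))
            * Real.sqrt (μ * ‖σ l ((AT l) (hT l)) - σ l ((AS l) (hT l))‖ ^ 2
                + (1 - μ) * ‖σ l ((AT l) (hS l)) - σ l ((AS l) (hS l))‖ ^ 2) := by
  set c : ℕ → ℝ := fun k => (K k : ℝ) * (μ * ‖AS k‖ + (1 - μ) * ‖AT k‖) with hc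
  set e : ℕ → ℝ := fun l => Real.sqrt (μ * ‖σ l ((AT l) (hT l)) - σ l ((AS l) (hT l))‖ ^ 2
      + (1 - μ) * ‖σ l ((AT l) (hS l)) - σ l ((AS l) (hS l))‖ ^ 2) with he
  have hcnn : ∀ k, 0 ≤ c k := by
    intro k
    apply mul_nonneg (K k).coe_nonneg
    have := norm_nonneg (AS k); have := norm_nonneg (AT k)
    nlinarith
  have henn : ∀ l, 0 ≤ e l := fun l => Real.sqrt_nonneg _
  -- one-step recursion
  have step : ∀ m, ‖hT (m + 1) - hS (m + 1)‖ ≤ c m * ‖hT m - hS m‖ + e m := by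
    intro m
    set a := ‖σ m ((AT m) (hT m)) - σ m ((AS m) (hT m))‖ with ha
    set b := ‖σ m ((AT m) (hS m)) - σ m ((AS m) (hS m))‖ with hb
    set d := ‖hT m - hS m‖ with hd
    have hem : e m = Real.sqrt (μ * a ^ 2 + (1 - μ) * b ^ 2) := rfl
    have hcm : c m = (K m : ℝ) * (μ * ‖AS m‖ + (1 - μ) * ‖AT m‖) := rfl
    clear_value a b d
    have hAS : ‖σ m ((AS m) (hT m)) - σ m ((AS m) (hS m))‖ ≤ (K m : ℝ) * ‖AS m‖ * d := by
      have h1 := (hσ m).dist_le_mul ((AS m) (hT m)) ((AS m) (hS m))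
      rw [dist_eq_norm, dist_eq_norm] at h1
      have h2 : ‖(AS m) (hT m) - (AS m) (hS m)‖ ≤ ‖AS m‖ * d := by
        rw [← map_sub, hd]; exact (AS m).le_opNorm _
      calc ‖σ m ((AS m) (hT m)) - σ m ((AS m) (hS m))‖
          ≤ (K m : ℝ) * ‖(AS m) (hT m) - (AS m) (hS m)‖ := h1
        _ ≤ (K m : ℝ) * (‖AS m‖ * d) :=
            mul_le_mul_of_nonneg_left h2 (K m).coe_nonneg
        _ = (K m : ℝ) * ‖AS m‖ * d := by ring
    have hAT : ‖σ m ((AT m) (hT m)) - σ m ((AT m) (hS m))‖ ≤ (K m : ℝ) * ‖AT m‖ * d := by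
      have h1 := (hσ m).dist_le_mul ((AT m) (hT m)) ((AT m) (hS m))
      rw [dist_eq_norm, dist_eq_norm] at h1
      have h2 : ‖(AT m) (hT m) - (AT m) (hS m)‖ ≤ ‖AT m‖ * d := by
        rw [← map_sub, hd]; exact (AT m).le_opNorm _
      calc ‖σ m ((AT m) (hT m)) - σ m ((AT m) (hS m))‖
          ≤ (K m : ℝ) * ‖(AT m) (hT m) - (AT m) (hS m)‖ := h1
        _ ≤ (K m : ℝ) * (‖AT m‖ * d) :=
            mul_le_mul_of_nonneg_left h2 (K m).coe_nonneg
        _ = (K m : ℝ) * ‖AT m‖ * d := by ring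
    have hdiff : hT (m + 1) - hS (m + 1) = σ m ((AT m) (hT m)) - σ m ((AS m) (hS m)) := by
      rw [hTrec, hSrec]
    have t1 : ‖hT (m + 1) - hS (m + 1)‖ ≤ a + (K m : ℝ) * ‖AS m‖ * d := by
      rw [hdiff]
      calc ‖σ m ((AT m) (hT m)) - σ m ((AS m) (hS m))‖
          ≤ ‖σ m ((AT m) (hT m)) - σ m ((AS m) (hT m))‖
            + ‖σ m ((AS m) (hT m)) - σ m ((AS m) (hS m))‖ := norm_sub_le_norm_sub_add_norm_sub _ _ _
        _ ≤ a + (K m : ℝ) * ‖AS m‖ * d := by rw [← ha]; linarith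
    have t2 : ‖hT (m + 1) - hS (m + 1)‖ ≤ (K m : ℝ) * ‖AT m‖ * d + b := by
      rw [hdiff]
      calc ‖σ m ((AT m) (hT m)) - σ m ((AS m) (hS m))‖
          ≤ ‖σ m ((AT m) (hT m)) - σ m ((AT m) (hS m))‖
            + ‖σ m ((AT m) (hS m)) - σ m ((AS m) (hS m))‖ := norm_sub_le_norm_sub_add_norm_sub _ _ _
        _ ≤ (K m : ℝ) * ‖AT m‖ * d + b := by rw [← hb]; linarith
    have tmix : ‖hT (m + 1) - hS (m + 1)‖ ≤ μ * a + (1 - μ) * b + c m * d := by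
      have u1 := mul_le_mul_of_nonneg_left t1 hμ0
      have u2 := mul_le_mul_of_nonneg_left t2 (by linarith : (0:ℝ) ≤ 1 - μ)
      have hid : μ * (a + (K m : ℝ) * ‖AS m‖ * d) + (1 - μ) * ((K m : ℝ) * ‖AT m‖ * d + b)
          = μ * a + (1 - μ) * b + c m * d := by rw [hcm]; ring
      linarith
    have hann : 0 ≤ a := by rw [ha]; exact norm_nonneg _
    have hbnn : 0 ≤ b := by rw [hb]; exact norm_nonneg _
    have tjensen : μ * a + (1 - μ) * b ≤ e m := by
      rw [hem]
      exact my_jensen2 μ a b hμ0 hμ1 hann hbnn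
    linarith
  -- induction bound
  have bound : ∀ m, ‖hT m - hS m‖ ≤
      ∑ l ∈ Finset.range m, (∏ k ∈ Finset.Ico (l + 1) m, c k) * e l := by
    intro m
    induction m with
    | zero => simp [hT0, hS0]
    | succ m ih =>
      calc ‖hT (m + 1) - hS (m + 1)‖ ≤ c m * ‖hT m - hS m‖ + e m := step m
        _ ≤ c m * (∑ l ∈ Finset.range m, (∏ k ∈ Finset.Ico (l + 1) m, c k) * e l) + e m := by
            have := mul_le_mul_of_nonneg_left ih (hcnn m); linarith
        _ = ∑ l ∈ Finset.range (m + 1), (∏ k ∈ Finset.Ico (l + 1) (m + 1), c k) * e l := by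
            rw [Finset.sum_range_succ, Finset.Ico_self, Finset.prod_empty, one_mul,
              Finset.mul_sum]
            congr 1
            apply Finset.sum_congr rfl
            intro l hl
            rw [Finset.mem_range] at hl
            rw [Finset.prod_Ico_succ_top (Nat.succ_le_of_lt hl)]
            ring
  -- conclude
  have hfin := bound L
  have hBnorm : ‖B (hT L) - B (hS L)‖ ≤ ‖B‖ * ‖hT L - hS L‖ := by
    rw [← map_sub]; exact B.le_opNorm _
  have hce := my_CE_lip hC (B (hT L)) (B (hS L)) y
  rw [hCE, hCE]
  calc |(Real.log (∑ i, Real.exp ((B (hT L)) i)) - (B (hT L)) y)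
        - (Real.log (∑ i, Real.exp ((B (hS L)) i)) - (B (hS L)) y)|
      ≤ 2 * ‖B (hT L) - B (hS L)‖ := hce
    _ ≤ 2 * (‖B‖ * ‖hT L - hS L‖) := by linarith
    _ ≤ 2 * (‖B‖ * (∑ l ∈ Finset.range L, (∏ k ∈ Finset.Ico (l + 1) L, c k) * e l)) := by
        have := mul_le_mul_of_nonneg_left hfin (norm_nonneg B)
        linarith
    _ = 2 * ‖B‖ * ∑ l ∈ Finset.range L, (∏ k ∈ Finset.Ico (l + 1) L, c k) * e l := by ring
end
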